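/- Let $(X_n,Y_n)$ be the augmented MH chain started in stationarity ($(X_1,Y_1)\sim\nu$), $f \in L^1(\mu)$, and $h(x,y) = \bar\rho(x,y)(f(y)-\mathbb E_\mu(f))$ with $h \in L^2(\nu)$. Then for every $k \geq 1$, $\mathrm{Cov}(h(X_1,Y_1), h(X_{1+k},Y_{1+k})) = 0$, and $\mathrm{Var}(h(X_1,Y_1)) = Z^2 \sigma_A^2(f)$ where $\sigma_A^2(f) = \int_G\int_G (f(y)-\mathbb E_\mu(f))^2 \frac{d\mu}{dP(x,\cdot)}(y)\, \mu(dy)\mu(dx)$. -/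

import Mathlib

open MeasureTheory ProbabilityTheory ENNReal Filter

/-!
From `(x, y)` the augmented chain moves to `(u, Y')` with `u ∈ {x, y}` and `Y' ~ P(u, ·)`, and the
importance-sampling identity `∫ ρ̄(u, y') g(y') P(u, dy') = Z ∫ g dμ` applied to `g = f - E_μ f`
shows that `h` integrates to `0` against every row of `K_aug`. Hence
`E[h(X_{n+1}, Y_{n+1}) | X_0, Y_0, …, X_n, Y_n] = 0`, which kills every lag-`k` covariance. Detailed
balance of the acceptance probability makes `ν` stationary for `K_aug`, so
`Var h(X_1, Y_1) = ∫ h² dν`, and the same identity applied to `ρ̄ (f - E_μ f)²` evaluates this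
integral.
-/

/-- The process `W` is a time-homogeneous Markov chain with transition kernel `κ`
under `Pr`: the conditional expectation of `1_A (W (n+1))` given the natural
σ-algebra generated by `W 0, …, W n` is `(κ (W n) A).toReal`. -/
def IsMarkovChain {S Ω : Type*} [MeasurableSpace S] [mΩ : MeasurableSpace Ω]
    (Pr : Measure Ω) (κ : Kernel S S) (W : ℕ → Ω → S) : Prop :=
  (∀ n, Measurable (W n)) ∧
  ∀ (n : ℕ) (A : Set S), MeasurableSet A →
    (Pr[fun ω => Set.indicator A (fun _ => (1 : ℝ)) (W (n + 1) ω) |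
        ⨆ i ∈ Finset.range (n + 1), MeasurableSpace.comap (W i) inferInstance])
      =ᵐ[Pr] fun ω => (κ (W n ω) A).toReal

section WithDensity

variable {α : Type*} [MeasurableSpace α] {μ : Measure α} {d : α → ℝ}

theorem integral_withDensity_ofReal (hd : Measurable d) (hd0 : ∀ x, 0 ≤ d x) (g : α → ℝ) :
    ∫ x, g x ∂μ.withDensity (fun x => ENNReal.ofReal (d x)) = ∫ x, d x * g x ∂μ := by
  rw [integral_withDensity_eq_integral_toReal_smul hd.ennreal_ofReal
    (ae_of_all _ fun _ => ofReal_lt_top)]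
  simp_rw [ENNReal.toReal_ofReal (hd0 _), smul_eq_mul]

theorem integrable_withDensity_ofReal_iff (hd : Measurable d) (hd0 : ∀ x, 0 ≤ d x)
    {g : α → ℝ} :
    Integrable g (μ.withDensity fun x => ENNReal.ofReal (d x)) ↔
      Integrable (fun x => d x * g x) μ := by
  rw [integrable_withDensity_iff_integrable_smul' hd.ennreal_ofReal
    (ae_of_all _ fun _ => ofReal_lt_top)]
  simp_rw [ENNReal.toReal_ofReal (hd0 _), smul_eq_mul]

theorem isProbabilityMeasure_withDensity_div_integral (hd0 : ∀ x, 0 ≤ d x)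
    (hint : Integrable d μ) (hpos : 0 < ∫ x, d x ∂μ) :
    IsProbabilityMeasure (μ.withDensity fun x => ENNReal.ofReal (d x / ∫ y, d y ∂μ)) := by
  constructor
  rw [withDensity_apply _ MeasurableSet.univ, Measure.restrict_univ,
    ← ofReal_integral_eq_lintegral_ofReal (hint.div_const _)
      (ae_of_all _ fun x => div_nonneg (hd0 x) hpos.le),
    integral_div, div_self hpos.ne', ofReal_one]

end WithDensity

section ImportanceWeight

variable {G : Type*} {ρ : G → ℝ} {p : G → G → ℝ}

noncomputable def importanceWeight (ρ : G → ℝ) (p : G → G → ℝ) (x y : G) : ℝ :=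
  if 0 < ρ y then ρ y / p x y else 0

theorem mul_importanceWeight {x y : G} (hρ : 0 ≤ ρ y) (hpos : 0 < ρ y → 0 < p x y) :
    p x y * importanceWeight ρ p x y = ρ y := by
  unfold importanceWeight
  split_ifs with h
  · exact mul_div_cancel₀ _ (hpos h).ne'
  · rw [mul_zero]
    exact hρ.antisymm (not_lt.1 h)

theorem measurable_importanceWeight [MeasurableSpace G] (hρ : Measurable ρ)
    (hp : Measurable (Function.uncurry p)) :
    Measurable (Function.uncurry (importanceWeight ρ p)) :=
  Measurable.ite (measurableSet_lt measurable_const (hρ.comp measurable_snd))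
    ((hρ.comp measurable_snd).div hp) measurable_const

end ImportanceWeight

section ImportanceSampling

variable {G : Type*} [MeasurableSpace G] {μ₀ : Measure G} {q w ρ : G → ℝ} {Z : ℝ}

theorem integral_weight_mul_eq (hq : Measurable q) (hq0 : ∀ y, 0 ≤ q y) (hρ : Measurable ρ)
    (hρ0 : ∀ y, 0 ≤ ρ y) (hZ : 0 < Z) (hqw : ∀ y, q y * w y = ρ y) (g : G → ℝ) :
    ∫ y, w y * g y ∂μ₀.withDensity (fun y => ENNReal.ofReal (q y)) =
      Z * ∫ y, g y ∂μ₀.withDensity (fun y => ENNReal.ofReal (ρ y / Z)) := by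
  rw [integral_withDensity_ofReal hq hq0,
    integral_withDensity_ofReal (hρ.div_const Z) fun y => div_nonneg (hρ0 y) hZ.le,
    ← integral_const_mul]
  refine integral_congr_ae (ae_of_all _ fun y => ?_)
  simp only [← hqw y]
  field_simp

theorem integrable_weight_mul (hq : Measurable q) (hq0 : ∀ y, 0 ≤ q y) (hρ : Measurable ρ)
    (hρ0 : ∀ y, 0 ≤ ρ y) (hZ : 0 < Z) (hqw : ∀ y, q y * w y = ρ y) {g : G → ℝ}
    (hg : Integrable g (μ₀.withDensity fun y => ENNReal.ofReal (ρ y / Z))) :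
    Integrable (fun y => w y * g y) (μ₀.withDensity fun y => ENNReal.ofReal (q y)) := by
  rw [integrable_withDensity_ofReal_iff hq hq0]
  rw [integrable_withDensity_ofReal_iff (hρ.div_const Z) fun y => div_nonneg (hρ0 y) hZ.le] at hg
  refine (hg.const_mul Z).congr (ae_of_all _ fun y => ?_)
  simp only [← hqw y]
  field_simp

theorem integral_sq_weight_mul_compProd {μ : Measure G} [SFinite μ] {P : Kernel G G}
    [IsSFiniteKernel P] {w : G → G → ℝ} {u : G → ℝ} (hZ : Z ≠ 0)
    (hIS : ∀ x (g : G → ℝ), ∫ y, w x y * g y ∂P x = Z * ∫ y, g y ∂μ)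
    (hint : Integrable (fun z : G × G => (w z.1 z.2 * u z.2) ^ 2) (μ.compProd P)) :
    ∫ z, (w z.1 z.2 * u z.2) ^ 2 ∂(μ.compProd P) =
      Z ^ 2 * ∫ x, ∫ y, u y ^ 2 * (w x y / Z) ∂μ ∂μ := by
  have hinner : ∀ x, ∫ y, (w x y * u y) ^ 2 ∂P x = Z ^ 2 * ∫ y, u y ^ 2 * (w x y / Z) ∂μ := by
    intro x
    calc ∫ y, (w x y * u y) ^ 2 ∂P x = ∫ y, w x y * (w x y * u y ^ 2) ∂P x := by
          congr with y; ring
      _ = Z * ∫ y, w x y * u y ^ 2 ∂μ := hIS x _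
      _ = Z ^ 2 * ∫ y, u y ^ 2 * (w x y / Z) ∂μ := by
          rw [← integral_const_mul, ← integral_const_mul]
          congr with y
          field_simp
  rw [Measure.integral_compProd hint]
  simp_rw [hinner, integral_const_mul]

end ImportanceSampling

section Acceptance

variable {G : Type*}

noncomputable def mhAcceptance (π : G → G → ℝ) (x y : G) : ℝ :=
  min 1 (if 0 < π x y then π y x / π x y else 1)

theorem min_one_ite_div_mul {a b : ℝ} (ha : 0 ≤ a) (hb : 0 ≤ b) :
    min 1 (if 0 < a then b / a else 1) * a = min a b := by
  rcases ha.lt_or_eq with ha | rfl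
  · rw [if_pos ha, min_mul_of_nonneg _ _ ha.le, one_mul, div_mul_cancel₀ _ ha.ne']
  · simp [hb]

variable {π : G → G → ℝ}

theorem mhAcceptance_nonneg (hπ : ∀ x y, 0 ≤ π x y) (x y : G) : 0 ≤ mhAcceptance π x y := by
  unfold mhAcceptance
  split_ifs with h
  · exact le_min zero_le_one (div_nonneg (hπ y x) h.le)
  · exact le_min zero_le_one zero_le_one

theorem mhAcceptance_le_one (x y : G) : mhAcceptance π x y ≤ 1 :=
  min_le_left _ _

theorem measurable_mhAcceptance [MeasurableSpace G] (hπ : Measurable (Function.uncurry π)) :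
    Measurable (Function.uncurry (mhAcceptance π)) :=
  measurable_const.min <| Measurable.ite (measurableSet_lt measurable_const hπ)
    ((hπ.comp measurable_swap).div hπ) measurable_const

theorem mhAcceptance_mul_symm (hπ : ∀ x y, 0 ≤ π x y) (x y : G) :
    mhAcceptance π x y * π x y = mhAcceptance π y x * π y x := by
  rw [mhAcceptance, mhAcceptance, min_one_ite_div_mul (hπ x y) (hπ y x),
    min_one_ite_div_mul (hπ y x) (hπ x y), min_comm]

theorem ofReal_mul_mhAcceptance_symm {ρ : G → ℝ} {p : G → G → ℝ} (hρ : ∀ x, 0 ≤ ρ x)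
    (hp : ∀ x y, 0 ≤ p x y) (Z : ℝ) (x y : G) :
    ENNReal.ofReal (ρ x / Z) * ENNReal.ofReal (p x y) *
        ENNReal.ofReal (mhAcceptance (fun x y => ρ x * p x y) x y) =
      ENNReal.ofReal (ρ y / Z) * ENNReal.ofReal (p y x) *
        ENNReal.ofReal (mhAcceptance (fun x y => ρ x * p x y) y x) := by
  have hπ : ∀ x y, 0 ≤ ρ x * p x y := fun x y => mul_nonneg (hρ x) (hp x y)
  rw [← ofReal_mul' (hp x y), ← ofReal_mul' (mhAcceptance_nonneg hπ x y), ← ofReal_mul' (hp y x),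
    ← ofReal_mul' (mhAcceptance_nonneg hπ y x)]
  congr 1
  linear_combination mhAcceptance_mul_symm hπ x y / Z

end Acceptance

section Reversibility

variable {G : Type*} [MeasurableSpace G] {μ₀ : Measure G} [SFinite μ₀] {m : G → ℝ≥0∞}
  {q : G → G → ℝ≥0∞}

theorem lintegral_lintegral_withDensity (hm : Measurable m)
    (hq : Measurable (Function.uncurry q)) {F : G → G → ℝ≥0∞}
    (hF : Measurable (Function.uncurry F)) :
    ∫⁻ x, ∫⁻ y, F x y ∂μ₀.withDensity (q x) ∂μ₀.withDensity m =
      ∫⁻ x, ∫⁻ y, m x * q x y * F x y ∂μ₀ ∂μ₀ := by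
  have hinner : ∀ x, ∫⁻ y, F x y ∂μ₀.withDensity (q x) = ∫⁻ y, q x y * F x y ∂μ₀ := fun x =>
    lintegral_withDensity_eq_lintegral_mul _ (hq.comp measurable_prodMk_left)
      (hF.comp measurable_prodMk_left)
  have hqF : Measurable fun z : G × G => q z.1 z.2 * F z.1 z.2 := hq.mul hF
  simp_rw [hinner]
  rw [lintegral_withDensity_eq_lintegral_mul _ hm hqF.lintegral_prod_right']
  refine lintegral_congr fun x => ?_
  simp_rw [Pi.mul_apply, mul_assoc]
  exact (lintegral_const_mul _ (hqF.comp measurable_prodMk_left)).symm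

theorem lintegral_mul_comp_snd_eq_comp_fst (hm : Measurable m)
    (hq : Measurable (Function.uncurry q)) {a : G → G → ℝ≥0∞}
    (ha : Measurable (Function.uncurry a)) {P : Kernel G G} [IsSFiniteKernel P]
    (hP : ∀ x, P x = μ₀.withDensity (q x))
    (hsymm : ∀ x y, m x * q x y * a x y = m y * q y x * a y x)
    {T : G → ℝ≥0∞} (hT : Measurable T) :
    ∫⁻ z, a z.1 z.2 * T z.2 ∂((μ₀.withDensity m).compProd P) =
      ∫⁻ z, a z.1 z.2 * T z.1 ∂((μ₀.withDensity m).compProd P) := by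
  have haT₂ : Measurable fun z : G × G => a z.1 z.2 * T z.2 := ha.mul (hT.comp measurable_snd)
  have haT₁ : Measurable fun z : G × G => a z.1 z.2 * T z.1 := ha.mul (hT.comp measurable_fst)
  have hflux : Measurable fun z : G × G => m z.1 * q z.1 z.2 * (a z.1 z.2 * T z.2) :=
    ((hm.comp measurable_fst).mul hq).mul haT₂
  rw [Measure.lintegral_compProd haT₂, Measure.lintegral_compProd haT₁]
  simp only [hP]
  rw [lintegral_lintegral_withDensity (F := fun x y => a x y * T y) hm hq haT₂,
    lintegral_lintegral_withDensity (F := fun x y => a x y * T x) hm hq haT₁,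
    lintegral_lintegral_swap hflux.aemeasurable]
  refine lintegral_congr fun x => lintegral_congr fun y => ?_
  rw [← mul_assoc, ← mul_assoc, hsymm y x]

end Reversibility

-- No integrability hypothesis is needed: a non-integrable `h` has Bochner integral `0`.
theorem integral_bind_eq_zero {α β : Type*} [MeasurableSpace α] [MeasurableSpace β]
    {σ : Measure α} {κ : Kernel α β} {h : β → ℝ} (hκ : ∀ a, ∫ y, h y ∂κ a = 0) :
    ∫ y, h y ∂σ.bind κ = 0 := by
  by_cases hint : Integrable h (σ.bind κ)
  · rw [Measure.comp_eq_comp_const_apply] at hint ⊢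
    rw [Kernel.integral_comp hint]
    simp [hκ]
  · exact integral_undef hint

section AugmentedKernel

variable {G : Type*} [MeasurableSpace G] {P : Kernel G G} {Kaug : Kernel (G × G) (G × G)}
  {α : G → G → ℝ}

noncomputable def augTransition (P : Kernel G G) (α : G → G → ℝ) (x y : G) :
    Measure (G × G) :=
  ENNReal.ofReal (α x y) • ((Measure.dirac y).prod (P y)) +
    ENNReal.ofReal (1 - α x y) • ((Measure.dirac x).prod (P x))

theorem integral_augTransition_eq_zero [IsSFiniteKernel P] {h : G × G → ℝ} (hh : Measurable h)
    (hint : ∀ u, Integrable (fun y => h (u, y)) (P u)) (h0 : ∀ u, ∫ y, h (u, y) ∂P u = 0)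
    (x y : G) :
    ∫ z, h z ∂augTransition P α x y = 0 := by
  have hint' : ∀ u, Integrable h ((Measure.dirac u).prod (P u)) := fun u => by
    rw [Measure.dirac_prod, integrable_map_measure hh.aestronglyMeasurable
      measurable_prodMk_left.aemeasurable]
    exact hint u
  have h0' : ∀ u, ∫ z, h z ∂(Measure.dirac u).prod (P u) = 0 := fun u => by
    rw [Measure.dirac_prod, integral_map measurable_prodMk_left.aemeasurable
      hh.aestronglyMeasurable]
    exact h0 u
  rw [augTransition, integral_add_measure ((hint' y).smul_measure ofReal_ne_top)
      ((hint' x).smul_measure ofReal_ne_top),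
    integral_smul_measure, integral_smul_measure, h0' x, h0' y, smul_zero, smul_zero, add_zero]

theorem bind_augTransition_eq_self {μ : Measure G} [SFinite μ] [IsMarkovKernel P]
    (hα : Measurable (Function.uncurry α)) (hα0 : ∀ x y, 0 ≤ α x y) (hα1 : ∀ x y, α x y ≤ 1)
    (hKaug : ∀ x y, Kaug (x, y) = augTransition P α x y)
    (hbal : ∀ T : G → ℝ≥0∞, Measurable T →
      ∫⁻ z, ENNReal.ofReal (α z.1 z.2) * T z.2 ∂(μ.compProd P) =
        ∫⁻ z, ENNReal.ofReal (α z.1 z.2) * T z.1 ∂(μ.compProd P)) :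
    (μ.compProd P).bind Kaug = μ.compProd P := by
  ext A hA
  set Q : G → ℝ≥0∞ := fun x => P x (Prod.mk x ⁻¹' A)
  have hQ : Measurable Q := Kernel.measurable_kernel_prodMk_left hA
  have ha : Measurable fun z : G × G => ENNReal.ofReal (α z.1 z.2) := hα.ennreal_ofReal
  have hQ₁ : Measurable fun z : G × G => Q z.1 := hQ.comp measurable_fst
  have haQ₁ : Measurable fun z : G × G => ENNReal.ofReal (α z.1 z.2) * Q z.1 := ha.mul hQ₁
  have hKA : ∀ z : G × G, Kaug z A =
      ENNReal.ofReal (α z.1 z.2) * Q z.2 + (1 - ENNReal.ofReal (α z.1 z.2)) * Q z.1 := by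
    rintro ⟨x, y⟩
    rw [hKaug, augTransition, Measure.add_apply, Measure.smul_apply, Measure.smul_apply,
      Measure.dirac_prod, Measure.dirac_prod, Measure.map_apply measurable_prodMk_left hA,
      Measure.map_apply measurable_prodMk_left hA, ofReal_sub _ (hα0 x y), ofReal_one]
    rfl
  calc ((μ.compProd P).bind Kaug) A = ∫⁻ z, Kaug z A ∂(μ.compProd P) :=
        Measure.bind_apply hA Kaug.measurable.aemeasurable
    _ = ∫⁻ z, ENNReal.ofReal (α z.1 z.2) * Q z.2 ∂(μ.compProd P) +
          ∫⁻ z, (1 - ENNReal.ofReal (α z.1 z.2)) * Q z.1 ∂(μ.compProd P) := by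
        simp_rw [hKA]
        exact lintegral_add_left (ha.mul (hQ.comp measurable_snd)) _
    _ = ∫⁻ z, ENNReal.ofReal (α z.1 z.2) * Q z.1 ∂(μ.compProd P) +
          ∫⁻ z, (1 - ENNReal.ofReal (α z.1 z.2)) * Q z.1 ∂(μ.compProd P) := by
        rw [hbal Q hQ]
    _ = ∫⁻ z, Q z.1 ∂(μ.compProd P) := by
        rw [← lintegral_add_left haQ₁]
        refine lintegral_congr fun z => ?_
        rw [← add_mul, add_tsub_cancel_of_le (ofReal_le_one.2 (hα1 _ _)), one_mul]
    _ = (μ.compProd P) A := by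
        rw [Measure.lintegral_compProd hQ₁, Measure.compProd_apply hA]
        simp [Q]

theorem bind_augTransition_mhAcceptance_eq_self {μ₀ : Measure G} [SFinite μ₀] {ρ : G → ℝ}
    (hρm : Measurable ρ) (hρ0 : ∀ x, 0 ≤ ρ x) (Z : ℝ) [IsMarkovKernel P] {p : G → G → ℝ}
    (hpm : Measurable (Function.uncurry p)) (hp0 : ∀ x y, 0 ≤ p x y)
    (hP : ∀ x, P x = μ₀.withDensity fun y => ENNReal.ofReal (p x y))
    (hKaug : ∀ x y, Kaug (x, y) = augTransition P (mhAcceptance fun x y => ρ x * p x y) x y) :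
    ((μ₀.withDensity fun x => ENNReal.ofReal (ρ x / Z)).compProd P).bind Kaug =
      (μ₀.withDensity fun x => ENNReal.ofReal (ρ x / Z)).compProd P := by
  have hπ : Measurable (Function.uncurry fun x y => ρ x * p x y) :=
    (hρm.comp measurable_fst).mul hpm
  exact bind_augTransition_eq_self (measurable_mhAcceptance hπ)
    (mhAcceptance_nonneg fun x y => mul_nonneg (hρ0 x) (hp0 x y)) mhAcceptance_le_one hKaug
    fun _ hT => lintegral_mul_comp_snd_eq_comp_fst (q := fun x y => ENNReal.ofReal (p x y))
      (a := fun x y => ENNReal.ofReal (mhAcceptance _ x y)) (hρm.div_const Z).ennreal_ofReal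
      hpm.ennreal_ofReal (measurable_mhAcceptance hπ).ennreal_ofReal hP
      (ofReal_mul_mhAcceptance_symm hρ0 hp0 Z) hT

end AugmentedKernel

theorem integral_mul_eq_zero_of_condExp_eq_zero {Ω : Type*} {m mΩ : MeasurableSpace Ω}
    {μ : Measure Ω} (hm : m ≤ mΩ) [SigmaFinite (μ.trim hm)] {X Y : Ω → ℝ}
    (hX : StronglyMeasurable[m] X) (hXY : Integrable (X * Y) μ) (hY : Integrable Y μ)
    (hcond : μ[Y|m] =ᵐ[μ] 0) :
    ∫ ω, X ω * Y ω ∂μ = 0 := by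
  calc ∫ ω, X ω * Y ω ∂μ = ∫ ω, (μ[X * Y|m]) ω ∂μ := (integral_condExp hm).symm
    _ = ∫ ω, (X * μ[Y|m]) ω ∂μ :=
        integral_congr_ae (condExp_mul_of_stronglyMeasurable_left hX hXY hY)
    _ = 0 := by
        rw [integral_congr_ae (hcond.mul_left (f₃ := X))]
        simp

section MarkovChain

variable {S Ω : Type*} [MeasurableSpace S] {W : ℕ → Ω → S}

abbrev chainPast (W : ℕ → Ω → S) (n : ℕ) : MeasurableSpace Ω :=
  ⨆ i ∈ Finset.range (n + 1), MeasurableSpace.comap (W i) inferInstance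

theorem measurable_chainPast {i n : ℕ} (hin : i ≤ n) : Measurable[chainPast W n] (W i) :=
  measurable_iff_comap_le.2 <|
    le_iSup₂_of_le (f := fun j (_ : j ∈ Finset.range (n + 1)) =>
      MeasurableSpace.comap (W j) inferInstance) i (Finset.mem_range.2 (Nat.lt_succ_of_le hin))
      le_rfl

variable [MeasurableSpace Ω] {Pr : Measure Ω} {κ : Kernel S S}

theorem chainPast_le (hW : ∀ n, Measurable (W n)) (n : ℕ) :
    chainPast W n ≤ ‹MeasurableSpace Ω› :=
  iSup₂_le fun i _ => (hW i).comap_le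

namespace IsMarkovChain

variable [IsFiniteMeasure Pr] [IsMarkovKernel κ]

theorem map_restrict_succ (hW : IsMarkovChain Pr κ W) {n : ℕ} {s : Set Ω}
    (hs : MeasurableSet[chainPast W n] s) :
    (Pr.restrict s).map (W (n + 1)) = ((Pr.restrict s).map (W n)).bind κ := by
  ext A hA
  rw [Measure.map_apply (hW.1 (n + 1)) hA, Measure.bind_apply hA κ.measurable.aemeasurable,
    lintegral_map (κ.measurable_coe hA) (hW.1 n)]
  have hind : (fun ω => A.indicator (fun _ => (1 : ℝ)) (W (n + 1) ω)) =
      (W (n + 1) ⁻¹' A).indicator 1 := by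
    funext ω
    exact (Set.indicator_comp_right (W (n + 1)) (g := fun _ => (1 : ℝ))).symm
  have hint : Integrable (fun ω => A.indicator (fun _ => (1 : ℝ)) (W (n + 1) ω)) Pr := by
    rw [hind]; exact (integrable_const 1).indicator (hW.1 (n + 1) hA)
  have hfin : ∫⁻ ω in s, κ (W n ω) A ∂Pr ≠ ∞ :=
    ((lintegral_mono fun _ => prob_le_one).trans_lt (by simp [measure_lt_top])).ne
  refine (toReal_eq_toReal_iff' (measure_ne_top _ _) hfin).1 ?_
  calc (Pr.restrict s (W (n + 1) ⁻¹' A)).toReal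
      = ∫ ω in s, A.indicator (fun _ => (1 : ℝ)) (W (n + 1) ω) ∂Pr := by
        rw [hind, integral_indicator_one (hW.1 (n + 1) hA)]; rfl
    _ = ∫ ω in s, (κ (W n ω) A).toReal ∂Pr := by
        rw [← setIntegral_condExp (chainPast_le hW.1 n) hint hs]
        exact integral_congr_ae (ae_restrict_of_ae (hW.2 n A hA))
    _ = (∫⁻ ω in s, κ (W n ω) A ∂Pr).toReal :=
        integral_toReal ((κ.measurable_coe hA).comp (hW.1 n)).aemeasurable
          (ae_of_all _ fun _ => measure_lt_top _ _)

theorem map_eq_of_bind_eq (hW : IsMarkovChain Pr κ W) {ν : Measure S}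
    (h0 : Pr.map (W 0) = ν) (hν : ν.bind κ = ν) (n : ℕ) : Pr.map (W n) = ν := by
  induction n with
  | zero => exact h0
  | succ n ih =>
    have := hW.map_restrict_succ (n := n) MeasurableSet.univ
    rwa [Measure.restrict_univ, ih, hν] at this

theorem condExp_eq_zero (hW : IsMarkovChain Pr κ W) {h : S → ℝ} (hh : Measurable h)
    (hκ : ∀ z, ∫ y, h y ∂κ z = 0) (n : ℕ) :
    Pr[fun ω => h (W (n + 1) ω) | chainPast W n] =ᵐ[Pr] 0 := by
  by_cases hint : Integrable (fun ω => h (W (n + 1) ω)) Pr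
  · refine (ae_eq_condExp_of_forall_setIntegral_eq (chainPast_le hW.1 n) hint
      (fun _ _ _ => integrableOn_zero) (fun s hs _ => ?_)
      stronglyMeasurable_const.aestronglyMeasurable).symm
    rw [← integral_map (hW.1 (n + 1)).aemeasurable hh.aestronglyMeasurable,
      hW.map_restrict_succ hs, integral_bind_eq_zero hκ]
    simp
  · rw [condExp_of_not_integrable hint]

theorem integral_mul_eq_zero (hW : IsMarkovChain Pr κ W) {g h : S → ℝ} (hg : Measurable g)
    (hh : Measurable h) (hκ : ∀ z, ∫ y, h y ∂κ z = 0) {i n : ℕ} (hin : i ≤ n)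
    (hint : Integrable (fun ω => g (W i ω) * h (W (n + 1) ω)) Pr)
    (hhint : Integrable (fun ω => h (W (n + 1) ω)) Pr) :
    ∫ ω, g (W i ω) * h (W (n + 1) ω) ∂Pr = 0 :=
  integral_mul_eq_zero_of_condExp_eq_zero (chainPast_le hW.1 n)
    (hg.comp (measurable_chainPast hin)).stronglyMeasurable hint hhint
    (hW.condExp_eq_zero hh hκ n)

theorem cov_eq_zero_and_var_eq (hW : IsMarkovChain Pr κ W) {ν : Measure S}
    (h0 : Pr.map (W 0) = ν) (hν : ν.bind κ = ν) {h : S → ℝ} (hh : Measurable h)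
    (hL2 : MemLp h 2 ν) (hκ : ∀ z, ∫ y, h y ∂κ z = 0) :
    (∀ k, 1 ≤ k → ∫ ω, h (W 0 ω) * h (W k ω) ∂Pr -
        (∫ ω, h (W 0 ω) ∂Pr) * ∫ ω, h (W k ω) ∂Pr = 0) ∧
      ∫ ω, h (W 0 ω) ^ 2 ∂Pr - (∫ ω, h (W 0 ω) ∂Pr) ^ 2 = ∫ z, h z ^ 2 ∂ν := by
  have hlaw := hW.map_eq_of_bind_eq h0 hν
  have hL2W : ∀ n, MemLp (fun ω => h (W n ω)) 2 Pr := fun n =>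
    (memLp_map_measure_iff hh.aestronglyMeasurable (hW.1 n).aemeasurable).1 (hlaw n ▸ hL2)
  have hmean : ∀ n, ∫ ω, h (W n ω) ∂Pr = 0 := fun n => by
    rw [← integral_map (hW.1 n).aemeasurable hh.aestronglyMeasurable, hlaw n, ← hν,
      integral_bind_eq_zero hκ]
  refine ⟨fun k hk => ?_, ?_⟩
  · obtain ⟨n, rfl⟩ : ∃ n, k = n + 1 := ⟨k - 1, by omega⟩
    rw [hmean 0, zero_mul, sub_zero]
    exact hW.integral_mul_eq_zero hh hh hκ (Nat.zero_le n)
      ((hL2W 0).integrable_mul (hL2W (n + 1))) ((hL2W (n + 1)).integrable one_le_two)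
  · rw [hmean 0, ← integral_map (hW.1 0).aemeasurable (hh.pow_const 2).aestronglyMeasurable, h0]
    simp

end IsMarkovChain

end MarkovChain

theorem mh_importance_sampling_zero_covariance_general
    {G : Type*} [MeasurableSpace G]
    (μ₀ : Measure G) [SigmaFinite μ₀]
    (ρ : G → ℝ) (hρm : Measurable ρ) (hρ0 : ∀ x, 0 ≤ ρ x) (hρint : Integrable ρ μ₀)
    (Z : ℝ) (hZ : Z = ∫ x, ρ x ∂μ₀) (hZpos : 0 < Z)
    (μ : Measure G)
    (hμ : μ = μ₀.withDensity fun x => ENNReal.ofReal (ρ x / Z))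
    (P : Kernel G G) [IsMarkovKernel P]
    (p : G → G → ℝ) (hpm : Measurable (Function.uncurry p)) (hp0 : ∀ x y, 0 ≤ p x y)
    (hP : ∀ x, P x = μ₀.withDensity fun y => ENNReal.ofReal (p x y))
    (hpos : ∀ x y, 0 < ρ y → 0 < p x y)
    (bar : G → G → ℝ) (hbar : ∀ x y, bar x y = if 0 < ρ y then ρ y / p x y else 0)
    (r : G → G → ℝ)
    (hr : ∀ x y, r x y = if 0 < ρ x * p x y then ρ y * p y x / (ρ x * p x y) else 1)
    (α : G → G → ℝ) (hα : ∀ x y, α x y = min 1 (r x y))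
    (Kaug : Kernel (G × G) (G × G)) [IsMarkovKernel Kaug]
    (hKaug : ∀ x y, Kaug (x, y) =
      ENNReal.ofReal (α x y) • ((Measure.dirac y).prod (P y)) +
      ENNReal.ofReal (1 - α x y) • ((Measure.dirac x).prod (P x)))
    (ν : Measure (G × G)) (hν : ν = μ.compProd P)
    {Ω : Type*} [MeasurableSpace Ω] (Pr : Measure Ω) [IsProbabilityMeasure Pr]
    (W : ℕ → Ω → G × G) (hW : IsMarkovChain Pr Kaug W)
    (hstart : Pr.map (W 0) = ν)
    (f : G → ℝ) (hfm : Measurable f) (hf : Integrable f μ)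
    (hh : MemLp (fun q : G × G => bar q.1 q.2 * (f q.2 - ∫ z, f z ∂μ)) 2 ν) :
    (∀ k, 1 ≤ k →
      (∫ ω, (bar (W 0 ω).1 (W 0 ω).2 * (f (W 0 ω).2 - ∫ z, f z ∂μ)) *
          (bar (W k ω).1 (W k ω).2 * (f (W k ω).2 - ∫ z, f z ∂μ)) ∂Pr) -
        (∫ ω, bar (W 0 ω).1 (W 0 ω).2 * (f (W 0 ω).2 - ∫ z, f z ∂μ) ∂Pr) *
        (∫ ω, bar (W k ω).1 (W k ω).2 * (f (W k ω).2 - ∫ z, f z ∂μ) ∂Pr) = 0) ∧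
    (∫ ω, (bar (W 0 ω).1 (W 0 ω).2 * (f (W 0 ω).2 - ∫ z, f z ∂μ))^2 ∂Pr) -
      (∫ ω, bar (W 0 ω).1 (W 0 ω).2 * (f (W 0 ω).2 - ∫ z, f z ∂μ) ∂Pr)^2 =
      Z^2 * ∫ x, ∫ y, (f y - ∫ z, f z ∂μ)^2 * (bar x y / Z) ∂μ ∂μ := by
  obtain rfl : α = mhAcceptance fun x y => ρ x * p x y := funext₂ fun x y => by rw [hα, hr]; rfl
  obtain rfl : bar = importanceWeight ρ p := funext₂ hbar
  have : IsProbabilityMeasure μ := by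
    rw [hμ, hZ]; exact isProbabilityMeasure_withDensity_div_integral hρ0 hρint (hZ ▸ hZpos)
  have hpx : ∀ x, Measurable (p x) := fun x => hpm.comp measurable_prodMk_left
  have hpw : ∀ x y, p x y * importanceWeight ρ p x y = ρ y := fun x y =>
    mul_importanceWeight (hρ0 y) (hpos x y)
  have hIS : ∀ x (g : G → ℝ), ∫ y, importanceWeight ρ p x y * g y ∂P x = Z * ∫ y, g y ∂μ :=
    fun x g => by
      rw [hP x, hμ]; exact integral_weight_mul_eq (hpx x) (hp0 x) hρm hρ0 hZpos (hpw x) g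
  set c := ∫ z, f z ∂μ
  have hcentered : ∫ y, (f y - c) ∂μ = 0 := by
    rw [integral_sub hf (integrable_const c)]; simp [c]
  set h : G × G → ℝ := fun z => importanceWeight ρ p z.1 z.2 * (f z.2 - c)
  have hhm : Measurable h :=
    (measurable_importanceWeight hρm hpm).mul ((hfm.comp measurable_snd).sub measurable_const)
  have hKh : ∀ z, ∫ q, h q ∂Kaug z = 0 := by
    rintro ⟨x, y⟩
    rw [hKaug]
    refine integral_augTransition_eq_zero hhm (fun u => ?_) (fun u => ?_) x y
    · rw [hP u]
      exact integrable_weight_mul (hpx u) (hp0 u) hρm hρ0 hZpos (hpw u)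
        (hμ ▸ hf.sub (integrable_const c))
    · rw [hIS, hcentered, mul_zero]
  have hstat : ν.bind Kaug = ν := by
    rw [hν, hμ]; exact bind_augTransition_mhAcceptance_eq_self hρm hρ0 Z hpm hp0 hP hKaug
  refine (hW.cov_eq_zero_and_var_eq hstart hstat hhm hh hKh).imp_right fun hvar => ?_
  rw [hvar, hν]
  exact integral_sq_weight_mul_compProd (u := fun y => f y - c) hZpos.ne' hIS
    (hν ▸ hh).integrable_sq

/-- For the stationary augmented MH chain and
h(x,y) = ρ̄(x,y)(f(y)-E_μ f) ∈ L²(ν): all lag-k covariances of h along the chain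
vanish, and Var(h(X₁,Y₁)) = Z² σ_A²(f). -/
theorem mh_importance_sampling_zero_covariance
    {G : Type*} [MeasurableSpace G]
    (μ₀ : Measure G) [SigmaFinite μ₀]
    (ρ : G → ℝ) (hρm : Measurable ρ) (hρ0 : ∀ x, 0 ≤ ρ x) (hρint : Integrable ρ μ₀)
    (Z : ℝ) (hZ : Z = ∫ x, ρ x ∂μ₀) (hZpos : 0 < Z)
    (μ : Measure G) [SFinite μ]
    (hμ : μ = μ₀.withDensity fun x => ENNReal.ofReal (ρ x / Z))
    (P : Kernel G G) [IsMarkovKernel P]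
    (p : G → G → ℝ) (hpm : Measurable (Function.uncurry p)) (hp0 : ∀ x y, 0 ≤ p x y)
    (hP : ∀ x, P x = μ₀.withDensity fun y => ENNReal.ofReal (p x y))
    (hpos : ∀ x y, 0 < ρ y → 0 < p x y)
    (bar : G → G → ℝ) (hbar : ∀ x y, bar x y = if 0 < ρ y then ρ y / p x y else 0)
    (r : G → G → ℝ)
    (hr : ∀ x y, r x y = if 0 < ρ x * p x y then ρ y * p y x / (ρ x * p x y) else 1)
    (α : G → G → ℝ) (hα : ∀ x y, α x y = min 1 (r x y))
    (K : Kernel G G) [IsMarkovKernel K]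
    (hK : ∀ x, K x = (P x).withDensity (fun y => ENNReal.ofReal (α x y)) +
      ENNReal.ofReal (∫ y, (1 - α x y) ∂(P x)) • Measure.dirac x)
    (Kaug : Kernel (G × G) (G × G)) [IsMarkovKernel Kaug]
    (hKaug : ∀ x y, Kaug (x, y) =
      ENNReal.ofReal (α x y) • ((Measure.dirac y).prod (P y)) +
      ENNReal.ofReal (1 - α x y) • ((Measure.dirac x).prod (P x)))
    (ν : Measure (G × G)) (hν : ν = μ.compProd P)
    {Ω : Type*} [MeasurableSpace Ω] (Pr : Measure Ω) [IsProbabilityMeasure Pr]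
    (W : ℕ → Ω → G × G) (hW : IsMarkovChain Pr Kaug W)
    (hstart : Pr.map (W 0) = ν)
    (f : G → ℝ) (hfm : Measurable f) (hf : Integrable f μ)
    (hh : MemLp (fun q : G × G => bar q.1 q.2 * (f q.2 - ∫ z, f z ∂μ)) 2 ν) :
    (∀ k, 1 ≤ k →
      (∫ ω, (bar (W 0 ω).1 (W 0 ω).2 * (f (W 0 ω).2 - ∫ z, f z ∂μ)) *
          (bar (W k ω).1 (W k ω).2 * (f (W k ω).2 - ∫ z, f z ∂μ)) ∂Pr) -
        (∫ ω, bar (W 0 ω).1 (W 0 ω).2 * (f (W 0 ω).2 - ∫ z, f z ∂μ) ∂Pr) *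
        (∫ ω, bar (W k ω).1 (W k ω).2 * (f (W k ω).2 - ∫ z, f z ∂μ) ∂Pr) = 0) ∧
    (∫ ω, (bar (W 0 ω).1 (W 0 ω).2 * (f (W 0 ω).2 - ∫ z, f z ∂μ))^2 ∂Pr) -
      (∫ ω, bar (W 0 ω).1 (W 0 ω).2 * (f (W 0 ω).2 - ∫ z, f z ∂μ) ∂Pr)^2 =
      Z^2 * ∫ x, ∫ y, (f y - ∫ z, f z ∂μ)^2 * (bar x y / Z) ∂μ ∂μ :=
  mh_importance_sampling_zero_covariance_general μ₀ ρ hρm hρ0 hρint Z hZ hZpos μ hμ P p hpm hp0 hP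
    hpos bar hbar r hr α hα Kaug hKaug ν hν Pr W hW hstart f hfm hf hh
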